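/- arXiv:1210.7420 — 5 statements merged into one kernel-verified Lean document; each statement's English description precedes it below -/
import Mathlib

section
/- Let φ be a ONE-IN-THREE 3SAT instance over n variables and let t : ℝⁿ → ℝ be the associated quartic trigonometric polynomial. Then t(x) ≥ 0 for all x ∈ ℝⁿ, and t(x) = 0 if and only if sin(x_i) ∈ {0,1} for every i and the assignment b with b i = sin(x_i) one-in-three-satisfies φ. -/
noncomputable section

open Real Set Filter

/-- A literal: a variable index together with a sign (`true` = the variable itself,
`false` = its negation). -/
abbrev Lit (n : ℕ) := Fin n × Bool

/-- A clause of a ONE-IN-THREE 3SAT instance: a triple of literals. -/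
abbrev Clause3 (n : ℕ) := Lit n × Lit n × Lit n

/-- Value of a literal under a real assignment `b`. -/
def litVal {n : ℕ} (b : Fin n → ℝ) (l : Lit n) : ℝ :=
  if l.2 then b l.1 else 1 - b l.1

/-- Sum of the three literal values of a clause under a real assignment `b`. -/
def clauseVal {n : ℕ} (b : Fin n → ℝ) (c : Clause3 n) : ℝ :=
  litVal b c.1 + litVal b c.2.1 + litVal b c.2.2

/-- A boolean assignment viewed as a `{0,1}`-valued real assignment. -/
def boolToReal {n : ℕ} (b : Fin n → Bool) : Fin n → ℝ := fun i => if b i then 1 else 0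

/-- `b` one-in-three-satisfies `φ`: in every clause the three literal values sum to `1`. -/
def OneInThreeSat {n : ℕ} (b : Fin n → Bool) (φ : List (Clause3 n)) : Prop :=
  ∀ c ∈ φ, clauseVal (boolToReal b) c = 1

/-- The quartic trigonometric polynomial `t` associated with the instance `φ`. -/
def tPoly {n : ℕ} (φ : List (Clause3 n)) (x : EuclideanSpace ℝ (Fin n)) : ℝ :=
  (∑ i : Fin n, Real.sin (x i) ^ 2 * (1 - Real.sin (x i)) ^ 2)
    + (φ.map (fun c => (clauseVal (fun i => Real.sin (x i)) c - 1) ^ 2)).sum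

theorem List.sum_eq_zero_iff_of_nonneg {M : Type*} [AddCommMonoid M] [PartialOrder M]
    [IsOrderedAddMonoid M] {l : List M} (h : ∀ a ∈ l, 0 ≤ a) :
    l.sum = 0 ↔ ∀ a ∈ l, a = 0 := by
  induction l with
  | nil => simp
  | cons b l ih =>
    rw [List.forall_mem_cons] at h
    rw [List.sum_cons, add_eq_zero_iff_of_nonneg h.1 (List.sum_nonneg h.2), ih h.2,
      List.forall_mem_cons]

theorem sq_mul_one_sub_sq_eq_zero_iff {R : Type*} [Ring R] [NoZeroDivisors R] {a : R} :
    a ^ 2 * (1 - a) ^ 2 = 0 ↔ a = 0 ∨ a = 1 := by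
  rw [mul_eq_zero, pow_eq_zero_iff two_ne_zero, pow_eq_zero_iff two_ne_zero, sub_eq_zero,
    eq_comm (a := 1)]

theorem stmt0 {n : ℕ} (φ : List (Clause3 n)) :
    (∀ x : EuclideanSpace ℝ (Fin n), 0 ≤ tPoly φ x) ∧
      ∀ x : EuclideanSpace ℝ (Fin n),
        tPoly φ x = 0 ↔
          (∀ i, Real.sin (x i) = 0 ∨ Real.sin (x i) = 1) ∧
            ∀ c ∈ φ, clauseVal (fun i => Real.sin (x i)) c = 1 := by
  have hvar (x : EuclideanSpace ℝ (Fin n)) (i : Fin n) :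
      0 ≤ Real.sin (x i) ^ 2 * (1 - Real.sin (x i)) ^ 2 := by positivity
  have hclause (x : EuclideanSpace ℝ (Fin n)) :
      ∀ a ∈ φ.map (fun c => (clauseVal (fun i => Real.sin (x i)) c - 1) ^ 2), 0 ≤ a :=
    List.forall_mem_map.2 fun _ _ => sq_nonneg _
  refine ⟨fun x => add_nonneg (Fintype.sum_nonneg (hvar x)) (List.sum_nonneg (hclause x)),
    fun x => ?_⟩
  rw [tPoly, add_eq_zero_iff_of_nonneg (Fintype.sum_nonneg (hvar x)) (List.sum_nonneg (hclause x)),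
    Fintype.sum_eq_zero_iff_of_nonneg (hvar x), List.sum_eq_zero_iff_of_nonneg (hclause x)]
  simp only [funext_iff, Pi.zero_apply, sq_mul_one_sub_sq_eq_zero_iff, List.forall_mem_map,
    pow_eq_zero_iff two_ne_zero, sub_eq_zero]
end
end

section
/- Let φ be a ONE-IN-THREE 3SAT instance over n variables and let t_h : ℝⁿ × ℝ → ℝ be the associated homogenized quartic trigonometric polynomial. Then t_h is locally positive definite if and only if no assignment b : Fin n → {0,1} one-in-three-satisfies φ. -/
/-!
With `s = sin y`, `t_h` is a sum of squares. Its first part vanishes exactly when every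
`sin xᵢ` is `0` or `s`, i.e. `sin xᵢ = bᵢ s` for a Boolean assignment `b`, and then each clause
term equals `s⁴ (clauseVal b c - 1)²`. Hence for a satisfying `b` the whole ray `δ (b, 1)` consists
of zeros of `t_h`. Conversely, inside the ball of radius `π` a zero with `s = 0` has all sines
zero and is the origin, while a zero with `s ≠ 0` yields a satisfying assignment.
-/

noncomputable section

open Real Set Filter

/-- Homogenized value of a literal at `z = (x, y) ∈ ℝⁿ × ℝ` (coordinates `0,…,n-1` are `x`,
the last coordinate is `y`): `L_{(i,true)}(z) = sin(x_i)sin(y)` and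
`L_{(i,false)}(z) = sin²(y) − sin(x_i)sin(y)`. -/
def homLitVal {n : ℕ} (z : EuclideanSpace ℝ (Fin (n+1))) (l : Lit n) : ℝ :=
  if l.2 then Real.sin (z l.1.castSucc) * Real.sin (z (Fin.last n))
  else Real.sin (z (Fin.last n)) ^ 2 - Real.sin (z l.1.castSucc) * Real.sin (z (Fin.last n))

/-- The homogenized quartic trigonometric polynomial `t_h` associated with `φ`. -/
def tHom {n : ℕ} (φ : List (Clause3 n)) (z : EuclideanSpace ℝ (Fin (n+1))) : ℝ :=
  (∑ i : Fin n,
      Real.sin (z i.castSucc) ^ 2 * (Real.sin (z (Fin.last n)) - Real.sin (z i.castSucc)) ^ 2)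
    + (φ.map (fun c => (homLitVal z c.1 + homLitVal z c.2.1 + homLitVal z c.2.2
        - Real.sin (z (Fin.last n)) ^ 2) ^ 2)).sum


theorem List.sum_map_sq_eq_zero_iff {α R : Type*} [CommRing R] [LinearOrder R]
    [IsStrictOrderedRing R] {l : List α} {f : α → R} :
    (l.map fun a => f a ^ 2).sum = 0 ↔ ∀ a ∈ l, f a = 0 := by
  have hnonneg : ∀ x ∈ l.map fun a => f a ^ 2, 0 ≤ x := by
    simp only [List.mem_map]
    rintro _ ⟨a, -, rfl⟩
    exact sq_nonneg _
  refine ⟨fun h a ha => ?_, fun h => ?_⟩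
  · exact pow_eq_zero_iff two_ne_zero |>.mp <|
      List.all_zero_of_le_zero_le_of_sum_eq_zero hnonneg h (List.mem_map_of_mem ha)
  · refine List.sum_eq_zero ?_
    simp only [List.mem_map]
    rintro _ ⟨a, ha, rfl⟩
    simp [h a ha]

theorem EuclideanSpace.eq_zero_of_sin_eq_zero {ι : Type*} [Fintype ι] {z : EuclideanSpace ℝ ι}
    (hz : ‖z‖ < π) (hsin : ∀ i, sin (z i) = 0) : z = 0 := by
  ext i
  have hi : |z i| < π := (PiLp.norm_apply_le z i).trans_lt hz
  exact (sin_eq_zero_iff_of_lt_of_lt (abs_lt.mp hi).1 (abs_lt.mp hi).2).mp (hsin i)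

section

variable {n : ℕ}

theorem oneInThreeSat_iff_sum_sq_eq_zero (b : Fin n → Bool) (φ : List (Clause3 n)) :
    OneInThreeSat b φ ↔ (φ.map fun c => (clauseVal (boolToReal b) c - 1) ^ 2).sum = 0 := by
  simp only [List.sum_map_sq_eq_zero_iff, sub_eq_zero, OneInThreeSat]

theorem homLitVal_eq_litVal_mul_sq {b : Fin n → Bool} {z : EuclideanSpace ℝ (Fin (n + 1))}
    (hz : ∀ i, sin (z i.castSucc) = boolToReal b i * sin (z (Fin.last n))) (l : Lit n) :
    homLitVal z l = litVal (boolToReal b) l * sin (z (Fin.last n)) ^ 2 := by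
  obtain ⟨i, _ | _⟩ := l <;>
    simp only [homLitVal, litVal, hz i, Bool.false_eq_true, ↓reduceIte] <;> ring

theorem tHom_eq_of_sin_eq {b : Fin n → Bool} {z : EuclideanSpace ℝ (Fin (n + 1))}
    (hz : ∀ i, sin (z i.castSucc) = boolToReal b i * sin (z (Fin.last n))) (φ : List (Clause3 n)) :
    tHom φ z = sin (z (Fin.last n)) ^ 4 *
      (φ.map fun c => (clauseVal (boolToReal b) c - 1) ^ 2).sum := by
  have hvar : ∀ i : Fin n,
      sin (z i.castSucc) ^ 2 * (sin (z (Fin.last n)) - sin (z i.castSucc)) ^ 2 = 0 := by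
    intro i
    rcases hb : b i <;> simp [hz i, boolToReal, hb]
  rw [tHom, Finset.sum_eq_zero fun i _ => hvar i, zero_add, ← List.sum_map_mul_left]
  congr 1
  refine List.map_congr_left fun c _ => ?_
  simp only [homLitVal_eq_litVal_mul_sq hz, clauseVal]
  ring

theorem tHom_nonneg (φ : List (Clause3 n)) (z : EuclideanSpace ℝ (Fin (n + 1))) :
    0 ≤ tHom φ z := by
  refine add_nonneg (Finset.sum_nonneg fun i _ => by positivity) (List.sum_nonneg ?_)
  simp only [List.mem_map]
  rintro _ ⟨c, -, rfl⟩
  positivity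

theorem sin_castSucc_eq_zero_or_eq_of_tHom_eq_zero {φ : List (Clause3 n)}
    {z : EuclideanSpace ℝ (Fin (n + 1))} (h : tHom φ z = 0) (i : Fin n) :
    sin (z i.castSucc) = 0 ∨ sin (z i.castSucc) = sin (z (Fin.last n)) := by
  have hB : 0 ≤ (φ.map fun c => (homLitVal z c.1 + homLitVal z c.2.1 + homLitVal z c.2.2
      - sin (z (Fin.last n)) ^ 2) ^ 2).sum := by
    refine List.sum_nonneg ?_
    simp only [List.mem_map]
    rintro _ ⟨c, -, rfl⟩
    positivity
  obtain ⟨hA, -⟩ :=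
    (add_eq_zero_iff_of_nonneg (Finset.sum_nonneg fun i _ => by positivity) hB).mp h
  have hi := (Finset.sum_eq_zero_iff_of_nonneg fun i _ => by positivity).mp hA i
    (Finset.mem_univ i)
  rcases mul_eq_zero.mp hi with hi | hi
  · exact .inl (pow_eq_zero_iff two_ne_zero |>.mp hi)
  · exact .inr (sub_eq_zero.mp (pow_eq_zero_iff two_ne_zero |>.mp hi)).symm

theorem exists_oneInThreeSat_of_tHom_eq_zero {φ : List (Clause3 n)}
    {z : EuclideanSpace ℝ (Fin (n + 1))} (hz : z ≠ 0) (hzπ : ‖z‖ < π) (h : tHom φ z = 0) :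
    ∃ b, OneInThreeSat b φ := by
  have hcases := sin_castSucc_eq_zero_or_eq_of_tHom_eq_zero h
  set s := sin (z (Fin.last n))
  have hs : s ≠ 0 := by
    intro hs
    refine hz <| EuclideanSpace.eq_zero_of_sin_eq_zero hzπ fun j =>
      Fin.lastCases hs (fun i => ?_) j
    rcases hcases i with hi | hi
    · exact hi
    · rw [hi, hs]
  set b : Fin n → Bool := fun i => decide (sin (z i.castSucc) = s)
  have hb : ∀ i, sin (z i.castSucc) = boolToReal b i * s := by
    intro i
    by_cases hi : sin (z i.castSucc) = s
    · simp [b, boolToReal, hi]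
    · simp [b, boolToReal, (hcases i).resolve_right hi]
  refine ⟨b, (oneInThreeSat_iff_sum_sq_eq_zero b φ).mpr ?_⟩
  rw [tHom_eq_of_sin_eq hb] at h
  exact (mul_eq_zero.mp h).resolve_left (pow_ne_zero 4 hs)

def assignmentPoint (b : Fin n → Bool) : EuclideanSpace ℝ (Fin (n + 1)) :=
  WithLp.toLp 2 (Fin.snoc (boolToReal b) 1)

theorem assignmentPoint_ne_zero (b : Fin n → Bool) : assignmentPoint b ≠ 0 := by
  intro h
  simpa [assignmentPoint] using congrArg (· (Fin.last n)) h

theorem tHom_smul_assignmentPoint {φ : List (Clause3 n)} {b : Fin n → Bool}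
    (hb : OneInThreeSat b φ) (δ : ℝ) : tHom φ (δ • assignmentPoint b) = 0 := by
  have hsin : ∀ i, sin ((δ • assignmentPoint b) i.castSucc)
      = boolToReal b i * sin ((δ • assignmentPoint b) (Fin.last n)) := by
    intro i
    rcases hbi : b i <;> simp [assignmentPoint, boolToReal, hbi]
  rw [tHom_eq_of_sin_eq hsin, (oneInThreeSat_iff_sum_sq_eq_zero b φ).mp hb, mul_zero]

end

theorem stmt1 {n : ℕ} (φ : List (Clause3 n)) :
    (∃ ε > (0:ℝ), ∀ z : EuclideanSpace ℝ (Fin (n+1)), 0 < ‖z‖ → ‖z‖ < ε → 0 < tHom φ z) ↔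
      ¬ ∃ b : Fin n → Bool, OneInThreeSat b φ := by
  constructor
  · rintro ⟨ε, hε, hpos⟩ ⟨b, hb⟩
    have hp : 0 < ‖assignmentPoint b‖ := norm_pos_iff.mpr (assignmentPoint_ne_zero b)
    have hnorm : ‖(ε / (2 * ‖assignmentPoint b‖)) • assignmentPoint b‖ = ε / 2 := by
      rw [norm_smul, Real.norm_of_nonneg (by positivity)]
      field_simp
    exact (hpos _ (by rw [hnorm]; positivity) (by rw [hnorm]; linarith)).ne'
      (tHom_smul_assignmentPoint hb _)
  · intro hunsat
    refine ⟨π, pi_pos, fun z hz hzπ => (tHom_nonneg φ z).lt_of_ne fun h => hunsat ?_⟩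
    exact exists_oneInThreeSat_of_tHom_eq_zero (norm_pos_iff.mp hz) hzπ h.symm
end
end

section
/- Let φ be a ONE-IN-THREE 3SAT instance over n variables and let t_h : ℝⁿ × ℝ → ℝ be the associated homogenized quartic trigonometric polynomial. If no assignment b : Fin n → {0,1} one-in-three-satisfies φ, then there exists ε > 0 such that the gradient ∇t_h(z) is nonzero for every z with 0 < ‖z‖ < ε. -/
noncomputable section

open Real Set Filter

/-!
`t_h = Q ∘ sin` for the quartic form `Q = homPoly φ`, with `sin` applied coordinatewise.
Take `ε = π / 2`, so that every `cos z_j` is nonzero. At a critical point `z` of `t_h`, the chain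
rule in the direction `tan z`, which the derivative of `sin` sends to `w = sin z`, gives
`DQ(w) w = 0`, and Euler's identity `DQ(w) w = 4 Q(w)` turns this into `Q(w) = 0`.
As `Q` is a sum of squares, each `w_i` is `0` or `w_y` and every clause term vanishes. If
`w_y ≠ 0`, the assignment `b_i = [w_i = w_y]` one-in-three-satisfies `φ`; if `w_y = 0` then
`w = 0`, hence `z = 0`.
-/

section Homogeneous

variable {E : Type*} [NormedAddCommGroup E] [NormedSpace ℝ E]

theorem fderiv_apply_self_of_homogeneous {f : E → ℝ} {x : E} {k : ℕ}
    (hf : DifferentiableAt ℝ f x) (hhom : ∀ t : ℝ, f (t • x) = t ^ k * f x) :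
    fderiv ℝ f x x = k * f x := by
  have hline : HasDerivAt (fun t : ℝ => t • x) x 1 := by
    simpa using (hasDerivAt_id (1 : ℝ)).smul_const x
  have h₁ : HasDerivAt (fun t : ℝ => f (t • x)) (fderiv ℝ f x x) 1 :=
    hf.hasFDerivAt.comp_hasDerivAt_of_eq 1 hline (one_smul ℝ x).symm
  have h₂ : HasDerivAt (fun t : ℝ => f (t • x)) (k * f x) 1 := by
    simpa [hhom] using (hasDerivAt_pow k (1 : ℝ)).mul_const (f x)
  exact h₁.unique h₂

end Homogeneous

section SineCoordinates

variable {ι : Type*} [Fintype ι]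

theorem hasFDerivAt_sin_coord (z : EuclideanSpace ℝ ι) :
    HasFDerivAt (fun z : EuclideanSpace ℝ ι => fun j => sin (z j))
      (ContinuousLinearMap.pi fun j => cos (z j) • EuclideanSpace.proj (𝕜 := ℝ) j) z :=
  hasFDerivAt_pi.2 fun j =>
    (hasDerivAt_sin (z j)).comp_hasFDerivAt (f := fun z : EuclideanSpace ℝ ι => z j) z
      (EuclideanSpace.proj (𝕜 := ℝ) j).hasFDerivAt

theorem eq_zero_of_fderiv_comp_sin_eq_zero {f : (ι → ℝ) → ℝ} {k : ℕ} (hk : k ≠ 0)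
    (hf : Differentiable ℝ f) (hhom : ∀ (t : ℝ) w, f (t • w) = t ^ k * f w)
    {z : EuclideanSpace ℝ ι} (hcos : ∀ j, cos (z j) ≠ 0)
    (hcrit : fderiv ℝ (fun z : EuclideanSpace ℝ ι => f fun j => sin (z j)) z = 0) :
    f (fun j => sin (z j)) = 0 := by
  set w : ι → ℝ := fun j => sin (z j)
  have hchain := (hf w).hasFDerivAt.comp z (hasFDerivAt_sin_coord z)
  have htan : (ContinuousLinearMap.pi fun j => cos (z j) • EuclideanSpace.proj (𝕜 := ℝ) j)
      (WithLp.toLp 2 fun j => tan (z j)) = w := by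
    funext j
    simp [w, tan_eq_sin_div_cos, mul_div_cancel₀ _ (hcos j)]
  have hcritw : fderiv ℝ f w w = 0 := by
    simpa [htan] using
      congrArg (· (WithLp.toLp 2 fun j => tan (z j))) (hchain.fderiv.symm.trans hcrit)
  rw [fderiv_apply_self_of_homogeneous (hf w) (hhom · w)] at hcritw
  exact (mul_eq_zero.1 hcritw).resolve_left (Nat.cast_ne_zero.2 hk)

end SineCoordinates

section QuarticForm

variable {n : ℕ}

def homLitPoly (w : Fin (n+1) → ℝ) (l : Lit n) : ℝ :=
  if l.2 then w l.1.castSucc * w (Fin.last n)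
  else w (Fin.last n) ^ 2 - w l.1.castSucc * w (Fin.last n)

def homClausePoly (w : Fin (n+1) → ℝ) (c : Clause3 n) : ℝ :=
  homLitPoly w c.1 + homLitPoly w c.2.1 + homLitPoly w c.2.2 - w (Fin.last n) ^ 2

def homPoly (φ : List (Clause3 n)) (w : Fin (n+1) → ℝ) : ℝ :=
  (∑ i : Fin n, w i.castSucc ^ 2 * (w (Fin.last n) - w i.castSucc) ^ 2)
    + (φ.map fun c => homClausePoly w c ^ 2).sum

theorem tHom_eq_homPoly_sin (φ : List (Clause3 n)) :
    tHom φ = fun z => homPoly φ fun j => sin (z j) :=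
  rfl

theorem differentiable_homPoly (φ : List (Clause3 n)) : Differentiable ℝ (homPoly φ) := by
  have hlit (l : Lit n) : Differentiable ℝ fun w => homLitPoly w l := by
    unfold homLitPoly; split <;> fun_prop
  have hclause (c : Clause3 n) : Differentiable ℝ fun w => homClausePoly w c := by
    unfold homClausePoly; have := hlit c.1; have := hlit c.2.1; have := hlit c.2.2; fun_prop
  refine Differentiable.add (by fun_prop) ?_
  induction φ with
  | nil => exact differentiable_const 0
  | cons c φ ih => exact ((hclause c).pow 2).add ih

theorem homPoly_smul (φ : List (Clause3 n)) (t : ℝ) (w : Fin (n+1) → ℝ) :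
    homPoly φ (t • w) = t ^ 4 * homPoly φ w := by
  have hclause (c : Clause3 n) : homClausePoly (t • w) c = t ^ 2 * homClausePoly w c := by
    simp only [homClausePoly, homLitPoly, Pi.smul_apply, smul_eq_mul]
    split_ifs <;> ring
  simp only [homPoly, hclause, mul_pow, ← pow_mul, List.sum_map_mul_left, mul_add, Finset.mul_sum,
    Pi.smul_apply, smul_eq_mul]
  congr 1
  exact Finset.sum_congr rfl fun i _ => by ring

variable {φ : List (Clause3 n)} {w : Fin (n+1) → ℝ}

theorem homPoly_eq_zero_iff :
    homPoly φ w = 0 ↔ (∀ i : Fin n, w i.castSucc = 0 ∨ w i.castSucc = w (Fin.last n)) ∧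
      ∀ c ∈ φ, homClausePoly w c = 0 := by
  have hvars : ∀ i ∈ (Finset.univ : Finset (Fin n)),
      0 ≤ w i.castSucc ^ 2 * (w (Fin.last n) - w i.castSucc) ^ 2 :=
    fun i _ => by positivity
  have hclauses : ∀ x ∈ φ.map fun c => homClausePoly w c ^ 2, 0 ≤ x :=
    List.forall_mem_map.2 fun c _ => sq_nonneg _
  rw [homPoly, add_eq_zero_iff_of_nonneg (Finset.sum_nonneg hvars) (List.sum_nonneg hclauses),
    Finset.sum_eq_zero_iff_of_nonneg hvars]
  refine and_congr (by simp [sub_eq_zero, eq_comm]) ⟨fun h c hc => ?_, fun h => ?_⟩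
  · exact pow_eq_zero_iff two_ne_zero |>.1 <|
      List.all_zero_of_le_zero_le_of_sum_eq_zero hclauses h (List.mem_map_of_mem hc)
  · exact List.sum_eq_zero (List.forall_mem_map.2 fun c hc => by simp [h c hc])

theorem homLitPoly_eq_mul_litVal
    (hw : ∀ i : Fin n, w i.castSucc = 0 ∨ w i.castSucc = w (Fin.last n)) (l : Lit n) :
    homLitPoly w l = w (Fin.last n) ^ 2 *
      litVal (boolToReal fun i => decide (w i.castSucc = w (Fin.last n))) l := by
  have hb (i : Fin n) : boolToReal (fun i => decide (w i.castSucc = w (Fin.last n))) i *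
      w (Fin.last n) = w i.castSucc := by
    by_cases h : w i.castSucc = w (Fin.last n)
    · simp [boolToReal, h]
    · simp [boolToReal, (hw i).resolve_right h, eq_comm]
  rcases l with ⟨i, _ | _⟩ <;>
    simp only [homLitPoly, litVal, ← hb i, Bool.false_eq_true, ↓reduceIte] <;> ring

theorem oneInThreeSat_of_homPoly_eq_zero (h : homPoly φ w = 0) (hy : w (Fin.last n) ≠ 0) :
    OneInThreeSat (fun i => decide (w i.castSucc = w (Fin.last n))) φ := by
  obtain ⟨hvars, hclauses⟩ := homPoly_eq_zero_iff.1 h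
  intro c hc
  have hc := hclauses c hc
  simp only [homClausePoly, homLitPoly_eq_mul_litVal hvars] at hc
  apply mul_left_cancel₀ (pow_ne_zero 2 hy)
  rw [clauseVal]
  linarith

theorem eq_zero_of_homPoly_eq_zero (h : homPoly φ w = 0) (hy : w (Fin.last n) = 0) : w = 0 :=
  funext <| Fin.lastCases hy fun i => by simpa [hy] using (homPoly_eq_zero_iff.1 h).1 i

end QuarticForm

theorem stmt2 {n : ℕ} (φ : List (Clause3 n))
    (hunsat : ¬ ∃ b : Fin n → Bool, OneInThreeSat b φ) :
    ∃ ε > (0:ℝ), ∀ z : EuclideanSpace ℝ (Fin (n+1)),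
      0 < ‖z‖ → ‖z‖ < ε → gradient (tHom φ) z ≠ 0 := by
  refine ⟨π / 2, by positivity, fun z hz_pos hz_lt hgrad => ?_⟩
  have hz (j : Fin (n+1)) : z j ∈ Ioo (-(π / 2)) (π / 2) :=
    abs_lt.1 ((PiLp.norm_apply_le z j).trans_lt hz_lt)
  have hcrit : fderiv ℝ (tHom φ) z = 0 := by simpa [gradient] using hgrad
  rw [tHom_eq_homPoly_sin] at hcrit
  have hzero := eq_zero_of_fderiv_comp_sin_eq_zero four_ne_zero (differentiable_homPoly φ)
    (homPoly_smul φ) (fun j => (cos_pos_of_mem_Ioo (hz j)).ne') hcrit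
  by_cases hy : sin (z (Fin.last n)) = 0
  · have hz_zero : z = 0 := by
      ext j
      have hsin : sin (z j) = 0 := congrFun (eq_zero_of_homPoly_eq_zero hzero hy) j
      exact (sin_eq_zero_iff_of_lt_of_lt (by linarith [(hz j).1, pi_pos])
        (by linarith [(hz j).2, pi_pos])).1 hsin
    simp [hz_zero] at hz_pos
  · exact hunsat ⟨_, oneInThreeSat_of_homPoly_eq_zero hzero hy⟩

end
end

section
/- Let V : ℝⁿ → ℝ be twice continuously differentiable with V(0) = 0. Then the origin is locally asymptotically stable for the gradient system ż = −∇V(z) if and only if there exists ε > 0 such that for all z with 0 < ‖z‖ < ε one has V(z) > 0 and ∇V(z) ≠ 0. -/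
noncomputable section

open Real Set Filter

/-- `x` is a solution of the ODE `x' = F(x)` on the time set `I`: a differentiable curve
whose derivative at every `t ∈ I` equals `F (x t)`. -/
def IsSolutionOn {E : Type*} [NormedAddCommGroup E] [NormedSpace ℝ E]
    (F : E → E) (x : ℝ → E) (I : Set ℝ) : Prop :=
  ∀ t ∈ I, HasDerivAt x (F (x t)) t

/-- The origin is stable in the sense of Lyapunov for `x' = F(x)`. -/
def LyapunovStable {E : Type*} [NormedAddCommGroup E] [NormedSpace ℝ E] (F : E → E) : Prop :=
  ∀ ε > (0:ℝ), ∃ δ > (0:ℝ), ∀ (T : ℝ) (x : ℝ → E),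
    IsSolutionOn F x (Set.Icc 0 T) → ‖x 0‖ < δ → ∀ t ∈ Set.Icc 0 T, ‖x t‖ < ε

/-- The origin is locally attractive for `x' = F(x)`. -/
def LocallyAttractive {E : Type*} [NormedAddCommGroup E] [NormedSpace ℝ E] (F : E → E) : Prop :=
  ∃ δ > (0:ℝ), ∀ x : ℝ → E, IsSolutionOn F x (Set.Ici 0) → ‖x 0‖ < δ →
    Filter.Tendsto x Filter.atTop (nhds 0)

/-- The origin is locally asymptotically stable for `x' = F(x)`. -/
def LAS {E : Type*} [NormedAddCommGroup E] [NormedSpace ℝ E] (F : E → E) : Prop :=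
  LyapunovStable F ∧ LocallyAttractive F

/-!
Sufficiency is Lyapunov's theorem with `V` itself as Lyapunov function: along the flow `V`
decreases at rate `‖∇V‖²`, which is bounded below by a positive constant on every compact set
free of critical points. For necessity, constant solutions at critical points force `∇V ≠ 0`
near `0`. If `V z' < 0` for some `z'` near `0`, stability keeps the trajectory from `z'` in a
small ball, where `{V ≤ V z'}` is compact and free of critical points, so the trajectory can
only stay there for a bounded time. This is absurd, since stability also makes the trajectory
exist for all time: the `C¹` field `-∇V` agrees near `0` with a globally Lipschitz field, whose
solutions are global, and stability keeps them in the region where the two fields agree.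
-/

open Metric Topology

section ODE

variable {E : Type*} [NormedAddCommGroup E] [NormedSpace ℝ E]

theorem IsSolutionOn.continuousOn {F : E → E} {y : ℝ → E} {I : Set ℝ}
    (hy : IsSolutionOn F y I) : ContinuousOn y I :=
  fun t ht => (hy t ht).continuousAt.continuousWithinAt

theorem exists_isSolutionOn_Icc_of_lipschitzWith [CompleteSpace E] {G : E → E} {K C : NNReal}
    (hG : LipschitzWith K G) (hC : ∀ x, ‖G x‖ ≤ C) (x₀ : E) (T : ℝ) :
    ∃ y : ℝ → E, y 0 = x₀ ∧ IsSolutionOn G y (Icc 0 T) := by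
  obtain ⟨T', hT'⟩ : ∃ T' : NNReal, T < T' :=
    ⟨T.toNNReal + 1, by push_cast; linarith [T.le_coe_toNNReal]⟩
  have hpl : IsPicardLindelof (fun _ => G) (tmin := -T') (tmax := T') ⟨0, by simp⟩ x₀
      (C * T') 0 C K :=
    .of_time_independent (fun x _ => hC x) hG.lipschitzOnWith (by simp)
  obtain ⟨y, hy0, hy⟩ := hpl.exists_eq_forall_mem_Icc_hasDerivWithinAt₀
  have hsub : Icc 0 T ⊆ Ioo (-T' : ℝ) T' := fun t ht =>
    ⟨by linarith [ht.1, ht.2], by linarith [ht.2]⟩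
  exact ⟨y, hy0, fun t ht =>
    (hy t (Ioo_subset_Icc_self (hsub ht))).hasDerivAt (Icc_mem_nhds (hsub ht).1 (hsub ht).2)⟩

theorem ContDiff.exists_lipschitzWith_eqOn_closedBall [FiniteDimensional ℝ E] {F : E → E}
    (hF : ContDiff ℝ 1 F) (R : ℝ) :
    ∃ (G : E → E) (K C : NNReal), LipschitzWith K G ∧ (∀ x, ‖G x‖ ≤ C) ∧
      EqOn G F (closedBall 0 R) := by
  let χ : ContDiffBump (0 : E) := ⟨max R 0 + 1, max R 0 + 2, by positivity, by linarith⟩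
  have hsupp : HasCompactSupport (fun x => χ x • F x) := χ.hasCompactSupport.smul_right
  have hsmooth : ContDiff ℝ 1 (fun x => χ x • F x) := χ.contDiff.smul hF
  obtain ⟨K, hK⟩ := hsmooth.lipschitzWith_of_hasCompactSupport hsupp one_ne_zero
  obtain ⟨C, hC⟩ := hsupp.exists_bound_of_continuous hsmooth.continuous
  refine ⟨_, K, ⟨max C 0, le_max_right _ _⟩, hK, fun x => (hC x).trans (le_max_left _ _),
    fun x hx => ?_⟩
  have hχ : χ x = 1 :=
    χ.one_of_mem_closedBall <| closedBall_subset_closedBall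
      (by change R ≤ max R 0 + 1; linarith [le_max_left R 0]) hx
  simp only [hχ, one_smul]

theorem IsSolutionOn.of_eqOn_closedBall {F G : E → E} {y : ℝ → E} {ρ T : ℝ}
    (hGF : EqOn G F (closedBall 0 ρ)) (hy : IsSolutionOn G y (Icc 0 T)) (hy0 : ‖y 0‖ < ρ)
    (htrap : ∀ S, IsSolutionOn F y (Icc 0 S) → ∀ t ∈ Icc 0 S, ‖y t‖ < ρ) :
    IsSolutionOn F y (Icc 0 T) := by
  suffices h : ∀ t ∈ Icc 0 T, ‖y t‖ < ρ from
    fun t ht => hGF (mem_closedBall_zero_iff.2 (h t ht).le) ▸ hy t ht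
  by_contra! ⟨t, ht, hρt⟩
  have hcont : ContinuousOn (fun s => ‖y s‖) (Icc 0 T) := hy.continuousOn.norm
  set S := Icc 0 T ∩ (fun s => ‖y s‖) ⁻¹' Ici ρ
  have hS : IsCompact S := isCompact_Icc.of_isClosed_subset
    (hcont.preimage_isClosed_of_isClosed isClosed_Icc isClosed_Ici) inter_subset_left
  obtain ⟨⟨ht₁0, ht₁T⟩, hρt₁⟩ : sInf S ∈ S := hS.sInf_mem ⟨t, ht, hρt⟩
  set t₁ := sInf S
  obtain ⟨c, hc, hyc⟩ :=
    intermediate_value_Icc ht₁0 (hcont.mono (Icc_subset_Icc_right ht₁T)) ⟨hy0.le, hρt₁⟩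
  have hct₁ : c = t₁ :=
    le_antisymm hc.2 (csInf_le hS.bddBelow ⟨⟨hc.1, hc.2.trans ht₁T⟩, hyc.symm.le⟩)
  have hbefore : ∀ s ∈ Icc 0 t₁, ‖y s‖ ≤ ρ := by
    intro s hs
    rcases hs.2.lt_or_eq with hlt | rfl
    · by_contra! hρs
      exact (csInf_le hS.bddBelow ⟨⟨hs.1, hlt.le.trans ht₁T⟩, hρs.le⟩).not_gt hlt
    · exact (hct₁ ▸ hyc).le
  have hsol : IsSolutionOn F y (Icc 0 t₁) := fun s hs =>
    hGF (mem_closedBall_zero_iff.2 (hbefore s hs)) ▸ hy s ⟨hs.1, hs.2.trans ht₁T⟩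
  exact (htrap t₁ hsol t₁ ⟨ht₁0, le_rfl⟩).not_ge hρt₁

theorem LyapunovStable.exists_isSolutionOn [FiniteDimensional ℝ E] {F : E → E}
    (hF : ContDiff ℝ 1 F) (hs : LyapunovStable F) :
    ∃ δ > 0, ∀ x₀ : E, ‖x₀‖ < δ → ∀ T,
      ∃ x : ℝ → E, x 0 = x₀ ∧ IsSolutionOn F x (Icc 0 T) := by
  obtain ⟨δ, hδ, hstab⟩ := hs 1 one_pos
  obtain ⟨G, K, C, hG, hC, hGF⟩ := hF.exists_lipschitzWith_eqOn_closedBall 1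
  refine ⟨min δ 1, by positivity, fun x₀ hx₀ T => ?_⟩
  obtain ⟨y, rfl, hy⟩ := exists_isSolutionOn_Icc_of_lipschitzWith hG hC x₀ T
  have hyδ : ‖y 0‖ < δ := hx₀.trans_le (min_le_left _ _)
  exact ⟨y, rfl, hy.of_eqOn_closedBall hGF (hx₀.trans_le (min_le_right _ _))
    fun S hS => hstab S y hS hyδ⟩

theorem LocallyAttractive.exists_ne_zero {F : E → E} (h : LocallyAttractive F) :
    ∃ r > 0, ∀ z : E, 0 < ‖z‖ → ‖z‖ < r → F z ≠ 0 := by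
  obtain ⟨δ, hδ, hattr⟩ := h
  refine ⟨δ, hδ, fun z hz hzδ hFz => hz.ne' (norm_eq_zero.2 ?_)⟩
  have hconst : IsSolutionOn F (fun _ => z) (Ici 0) := fun t _ => by
    simpa [hFz] using hasDerivAt_const t z
  exact tendsto_nhds_unique tendsto_const_nhds (hattr _ hconst hzδ)

end ODE

section GradientFlow

variable {E : Type*} [NormedAddCommGroup E] [InnerProductSpace ℝ E] {V : E → ℝ}

theorem ContDiff.gradient [CompleteSpace E] {m n : WithTop ℕ∞} (hV : ContDiff ℝ n V)
    (hmn : m + 1 ≤ n) :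
    ContDiff ℝ m (gradient V) :=
  (InnerProductSpace.toDual ℝ E).symm.contDiff.comp (hV.fderiv_right hmn)

theorem HasDerivAt.hasDerivAt_comp_of_neg_gradient [CompleteSpace E] {x : ℝ → E} {t : ℝ}
    (hV : DifferentiableAt ℝ V (x t)) (hx : HasDerivAt x (-gradient V (x t)) t) :
    HasDerivAt (fun s => V (x s)) (-‖gradient V (x t)‖ ^ 2) t := by
  have h := hV.hasGradientAt.hasFDerivAt.comp_hasDerivAt t hx
  rwa [map_neg, InnerProductSpace.toDual_apply_apply, real_inner_self_eq_norm_sq] at h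

theorem IsSolutionOn.antitoneOn_comp_add_mul [CompleteSpace E] (hV : Differentiable ℝ V)
    {x : ℝ → E} {a b μ : ℝ}
    (hx : IsSolutionOn (fun z => -gradient V z) x (Icc a b))
    (hμ : ∀ t ∈ Icc a b, μ ≤ ‖gradient V (x t)‖ ^ 2) :
    AntitoneOn (fun t => V (x t) + μ * t) (Icc a b) := by
  have hderiv : ∀ t ∈ Icc a b,
      HasDerivAt (fun s => V (x s) + μ * s) (-‖gradient V (x t)‖ ^ 2 + μ) t := fun t ht => by
    simpa using ((hx t ht).hasDerivAt_comp_of_neg_gradient (hV _)).fun_add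
      ((hasDerivAt_id t).const_mul μ)
  refine antitoneOn_of_hasDerivWithinAt_nonpos (convex_Icc a b)
    (fun t ht => (hderiv t ht).continuousAt.continuousWithinAt)
    (fun t ht => (hderiv t (interior_subset ht)).hasDerivWithinAt) fun t ht => ?_
  linarith [hμ t (interior_subset ht)]

theorem IsSolutionOn.antitoneOn_comp [CompleteSpace E] (hV : Differentiable ℝ V)
    {x : ℝ → E} {a b : ℝ}
    (hx : IsSolutionOn (fun z => -gradient V z) x (Icc a b)) :
    AntitoneOn (fun t => V (x t)) (Icc a b) := by
  simpa using hx.antitoneOn_comp_add_mul hV (μ := 0) fun t _ => sq_nonneg _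

theorem exists_exit_time_of_isCompact [CompleteSpace E] (hV : ContDiff ℝ 1 V) {K : Set E}
    (hK : IsCompact K) (hcrit : ∀ w ∈ K, gradient V w ≠ 0) :
    ∃ T₀, ∀ x : ℝ → E, IsSolutionOn (fun z => -gradient V z) x (Icc 0 T₀) →
      ∃ t ∈ Icc 0 T₀, x t ∉ K := by
  obtain ⟨μ, hμ, hμK⟩ := hK.exists_forall_le' (a := 0)
    ((hV.gradient (m := 0) (by simp)).continuous.norm.pow 2).continuousOn
    fun w hw => pow_pos (norm_pos_iff.2 (hcrit w hw)) 2
  obtain ⟨M, hM⟩ := hK.exists_bound_of_continuousOn hV.continuous.continuousOn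
  obtain ⟨T₀, hT₀, hT₀M⟩ : ∃ T₀ > 0, 2 * M < μ * T₀ :=
    ⟨(|2 * M| + 1) / μ, by positivity, by
      rw [mul_div_cancel₀ _ hμ.ne']; linarith [le_abs_self (2 * M)]⟩
  refine ⟨T₀, fun x hx => ?_⟩
  by_contra! hin
  have h0 : (0 : ℝ) ∈ Icc 0 T₀ := ⟨le_rfl, hT₀.le⟩
  have hT : T₀ ∈ Icc 0 T₀ := ⟨hT₀.le, le_rfl⟩
  have hdrop := hx.antitoneOn_comp_add_mul (hV.differentiable one_ne_zero)
    (fun t ht => hμK _ (hin t ht)) h0 hT hT₀.le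
  have hbound0 := abs_le.1 (hM _ (hin 0 h0))
  have hboundT := abs_le.1 (hM _ (hin T₀ hT))
  simp only [mul_zero, add_zero] at hdrop
  linarith [hbound0.2, hboundT.1]

theorem exists_lt_of_gradient_ne_zero [CompleteSpace E] {z : E} (hz : gradient V z ≠ 0)
    {U : Set E} (hU : U ∈ 𝓝 z) : ∃ w ∈ U, V w < V z := by
  by_contra! hmin
  exact hz (by simp [gradient, IsLocalMin.fderiv_eq_zero (Filter.mem_of_superset hU hmin)])

theorem lyapunovStable_neg_gradient [ProperSpace E] (hV : Differentiable ℝ V) (hV0 : V 0 = 0)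
    {ε : ℝ} (hε : 0 < ε) (hpos : ∀ z : E, 0 < ‖z‖ → ‖z‖ < ε → 0 < V z) :
    LyapunovStable (fun z => -gradient V z) := by
  intro ε₀ hε₀
  set ρ := min ε₀ ε / 2 with hρ
  have hρ0 : 0 < ρ := by positivity
  have hρε : ρ < ε := by linarith [min_le_right ε₀ ε]
  have hρε₀ : ρ < ε₀ := by linarith [min_le_left ε₀ ε]
  obtain ⟨m, hm, hmV⟩ := (isCompact_sphere (0 : E) ρ).exists_forall_le' (a := 0)
    hV.continuous.continuousOn fun w hw => hpos w (by simp_all) (by simp_all)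
  obtain ⟨δ, hδ, hVδ⟩ := Metric.continuousAt_iff.1 (hV.continuous.continuousAt (x := 0)) m hm
  refine ⟨min δ ρ, by positivity, fun T x hx hx0 t ht => ?_⟩
  by_contra! hxt
  obtain ⟨s, hs, hxs⟩ := intermediate_value_Icc ht.1
    (hx.continuousOn.mono (Icc_subset_Icc_right ht.2)).norm
    ⟨(hx0.trans_le (min_le_right _ _)).le, hρε₀.le.trans hxt⟩
  have hdecrease : V (x s) ≤ V (x 0) := hx.antitoneOn_comp hV ⟨le_rfl, ht.1.trans ht.2⟩
    ⟨hs.1, hs.2.trans ht.2⟩ hs.1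
  have hsmall : V (x 0) < m := by
    have := hVδ (x := x 0) (by simpa [dist_zero_right] using hx0.trans_le (min_le_left _ _))
    rw [hV0, Real.dist_eq, sub_zero] at this
    exact (le_abs_self _).trans_lt this
  linarith [hmV (x s) (by simpa using hxs)]

theorem locallyAttractive_neg_gradient [ProperSpace E] (hV : ContDiff ℝ 1 V) (hV0 : V 0 = 0)
    {ε : ℝ} (hε : 0 < ε)
    (hpos : ∀ z : E, 0 < ‖z‖ → ‖z‖ < ε → 0 < V z ∧ gradient V z ≠ 0) :
    LocallyAttractive (fun z => -gradient V z) := by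
  have hVd : Differentiable ℝ V := hV.differentiable one_ne_zero
  obtain ⟨δ, hδ, hstab⟩ := lyapunovStable_neg_gradient hVd hV0 hε
    (fun z h₁ h₂ => (hpos z h₁ h₂).1) (ε / 2) (by positivity)
  refine ⟨δ, hδ, fun x hx hx0 => Metric.tendsto_atTop.2 fun η hη => ?_⟩
  have hsol : ∀ a b, 0 ≤ a → IsSolutionOn (fun z => -gradient V z) x (Icc a b) :=
    fun a b ha t ht => hx t (ha.trans ht.1)
  have hball : ∀ t, 0 ≤ t → x t ∈ closedBall 0 (ε / 2) := fun t ht =>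
    mem_closedBall_zero_iff.2 (hstab t x (hsol 0 t le_rfl) hx0 t ⟨ht, le_rfl⟩).le
  have hhalf : ∀ w ∈ closedBall (0 : E) (ε / 2), ‖w‖ < ε := fun w hw =>
    (mem_closedBall_zero_iff.1 hw).trans_lt (by linarith)
  -- `V ≥ m` away from the `η`-ball, and the flow must eventually push `V` below `m`.
  obtain ⟨m, hm, hmV⟩ := ((isCompact_closedBall (0 : E) (ε / 2)).inter_right
    (isClosed_le continuous_const continuous_norm)).exists_forall_le' (a := 0)
    hV.continuous.continuousOn fun w hw => (hpos w (hη.trans_le hw.2) (hhalf w hw.1)).1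
  obtain ⟨T₀, hT₀⟩ := exists_exit_time_of_isCompact hV
    ((isCompact_closedBall (0 : E) (ε / 2)).inter_right
      (isClosed_le continuous_const hV.continuous))
    (K := closedBall 0 (ε / 2) ∩ {w | m ≤ V w}) fun w hw => by
      have hw0 : w ≠ 0 := by rintro rfl; linarith [hw.2.out, hV0]
      exact (hpos w (norm_pos_iff.2 hw0) (hhalf w hw.1)).2
  obtain ⟨t₀, ht₀, hxt₀⟩ := hT₀ x (hsol 0 T₀ le_rfl)
  have hVt₀ : V (x t₀) < m := by
    simpa [hball t₀ ht₀.1] using hxt₀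
  refine ⟨t₀, fun t ht => ?_⟩
  have hVt : V (x t) < m :=
    ((hsol t₀ t ht₀.1).antitoneOn_comp hVd ⟨le_rfl, ht⟩ ⟨ht, le_rfl⟩ ht).trans_lt hVt₀
  rw [dist_zero_right]
  by_contra! hηt
  exact hVt.not_ge (hmV (x t) ⟨hball t (ht₀.1.trans ht), hηt⟩)

theorem LAS.exists_forall_pos_and_gradient_ne_zero [FiniteDimensional ℝ E] (hV : ContDiff ℝ 2 V)
    (hV0 : V 0 = 0) (h : LAS (fun z => -gradient V z)) :
    ∃ ε > 0, ∀ z : E, 0 < ‖z‖ → ‖z‖ < ε → 0 < V z ∧ gradient V z ≠ 0 := by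
  have hV1 : ContDiff ℝ 1 V := hV.of_le (by norm_num)
  obtain ⟨r, hr, hcrit⟩ := h.2.exists_ne_zero
  obtain ⟨δ₁, hδ₁, htrap⟩ := h.1 (r / 2) (by positivity)
  obtain ⟨δ₂, hδ₂, hexists⟩ := h.1.exists_isSolutionOn (hV.gradient (by norm_num)).neg
  refine ⟨min r (min δ₁ δ₂), by positivity, fun z hz hzε => ?_⟩
  have hgrad : gradient V z ≠ 0 := neg_ne_zero.1 (hcrit z hz (hzε.trans_le (min_le_left _ _)))
  refine ⟨?_, hgrad⟩
  by_contra! hVz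
  obtain ⟨z', hz'ε, hVz'⟩ := exists_lt_of_gradient_ne_zero hgrad
    (isOpen_ball.mem_nhds (mem_ball_zero_iff.2 hzε))
  rw [mem_ball_zero_iff] at hz'ε
  obtain ⟨T₀, hT₀⟩ := exists_exit_time_of_isCompact hV1
    ((isCompact_closedBall (0 : E) (r / 2)).inter_right
      (isClosed_le hV.continuous continuous_const))
    (K := closedBall 0 (r / 2) ∩ {w | V w ≤ V z'}) fun w hw => by
      have hw0 : w ≠ 0 := by rintro rfl; linarith [hw.2.out, hV0]
      refine neg_ne_zero.1 (hcrit w (norm_pos_iff.2 hw0) ?_)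
      linarith [mem_closedBall_zero_iff.1 hw.1]
  obtain ⟨x, rfl, hx⟩ :=
    hexists z' (hz'ε.trans_le ((min_le_right _ _).trans (min_le_right _ _))) T₀
  obtain ⟨t, ht, hxt⟩ := hT₀ x hx
  refine hxt ⟨mem_closedBall_zero_iff.2 (htrap T₀ x hx ?_ t ht).le,
    hx.antitoneOn_comp (hV1.differentiable one_ne_zero) ⟨le_rfl, ht.1.trans ht.2⟩ ht ht.1⟩
  exact hz'ε.trans_le ((min_le_right _ _).trans (min_le_left _ _))

end GradientFlow

theorem stmt3 {n : ℕ} (V : EuclideanSpace ℝ (Fin n) → ℝ)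
    (hV : ContDiff ℝ 2 V) (hV0 : V 0 = 0) :
    LAS (fun z => -gradient V z) ↔
      ∃ ε > (0:ℝ), ∀ z : EuclideanSpace ℝ (Fin n),
        0 < ‖z‖ → ‖z‖ < ε → 0 < V z ∧ gradient V z ≠ 0 := by
  refine ⟨fun h => h.exists_forall_pos_and_gradient_ne_zero hV hV0, fun ⟨ε, hε, h⟩ => ?_⟩
  have hV1 : ContDiff ℝ 1 V := hV.of_le (by norm_num)
  exact ⟨lyapunovStable_neg_gradient (hV1.differentiable one_ne_zero) hV0 hε fun z h₁ h₂ =>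
    (h z h₁ h₂).1, locallyAttractive_neg_gradient hV1 hV0 hε h⟩
end
end

section
/- Let p : ℝⁿ → ℝ be a quartic form. Then the closed unit ball is invariant under the cubic vector field ẋ = −∇p(x) — that is, every solution x on any interval [0,T] with ‖x(0)‖ ≤ 1 satisfies ‖x(t)‖ ≤ 1 for all t ∈ [0,T] — if and only if p(x) ≥ 0 for all x ∈ ℝⁿ. -/
/-!
Along any solution of `ẋ = -∇p(x)` with `p` homogeneous of degree `k`, Euler's identity
`⟪∇p(z), z⟫ = k p(z)` gives `d/dt ‖x‖² = -2k p(x)`. If `p ≥ 0` the norm is therefore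
nonincreasing. If `p(y) < 0` for some `y`, rescale it to the unit sphere; the solution started
at `y` (which exists locally since `∇p` is `C¹`) leaves the unit ball immediately.
-/

noncomputable section

open Set Filter Topology InnerProductSpace
open scoped Gradient

theorem contDiff_of_forall_eq_mvPolynomial_eval {ι : Type*} [Fintype ι]
    {p : EuclideanSpace ℝ ι → ℝ} (P : MvPolynomial ι ℝ)
    (hP : ∀ x : EuclideanSpace ℝ ι, p x = MvPolynomial.eval (x : ι → ℝ) P)
    {m : WithTop ℕ∞} : ContDiff ℝ m p := by
  rw [show p = _ from funext hP]
  exact (AnalyticOnNhd.eval_continuousLinearMap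
    (EuclideanSpace.equiv ι ℝ).toContinuousLinearMap P).contDiff

theorem HasDerivAt.exists_lt_of_pos {g : ℝ → ℝ} {c a ε : ℝ} (hg : HasDerivAt g c a)
    (hc : 0 < c) (hε : 0 < ε) : ∃ t ∈ Ioo a (a + ε), g a < g t := by
  have hslope : ∀ᶠ t in 𝓝[>] a, 0 < slope g a t :=
    (hasDerivAt_iff_tendsto_slope.mp hg).mono_left (nhdsGT_le_nhdsNE a)
      |>.eventually (lt_mem_nhds hc)
  obtain ⟨t, hgt, ht⟩ := (hslope.and (Ioo_mem_nhdsGT (lt_add_of_pos_right a hε))).exists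
  exact ⟨t, ht, (slope_pos_iff ht.1).mp hgt⟩

theorem exists_norm_eq_one_of_homogeneous_neg {F : Type*} [NormedAddCommGroup F] [NormedSpace ℝ F]
    {p : F → ℝ} {k : ℕ} (hk : k ≠ 0)
    (hhom : ∀ (c : ℝ) (z : F), p (c • z) = c ^ k * p z) {z : F} (hz : p z < 0) :
    ∃ y : F, ‖y‖ = 1 ∧ p y < 0 := by
  have hz0 : z ≠ 0 := by
    rintro rfl
    have hp0 : p 0 = 0 := by simpa [hk] using hhom 0 0
    exact hz.ne hp0
  refine ⟨‖z‖⁻¹ • z, norm_smul_inv_norm hz0, ?_⟩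
  rw [hhom]
  exact mul_neg_of_pos_of_neg (by positivity) hz

section GradientFlow

variable {E : Type*} [NormedAddCommGroup E] [InnerProductSpace ℝ E] [CompleteSpace E]
  {p : E → ℝ} {k : ℕ}

theorem inner_gradient_self_of_homogeneous (hp : Differentiable ℝ p)
    (hhom : ∀ (c : ℝ) (z : E), p (c • z) = c ^ k * p z) (z : E) :
    ⟪∇ p z, z⟫_ℝ = k * p z := by
  have hchain : HasDerivAt (fun c : ℝ => p (c • z)) (fderiv ℝ p z z) 1 := by
    have hline : HasDerivAt (fun c : ℝ => c • z) z 1 := by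
      simpa using (hasDerivAt_id (1 : ℝ)).smul_const z
    exact (hp z).hasFDerivAt.comp_hasDerivAt_of_eq 1 hline (one_smul ℝ z).symm
  have hpow : HasDerivAt (fun c : ℝ => p (c • z)) (k * p z) 1 := by
    simpa [hhom] using (hasDerivAt_pow k (1 : ℝ)).mul_const (p z)
  rw [inner_gradient_left, hchain.unique hpow]

theorem hasDerivAt_norm_sq_of_neg_gradient (hp : Differentiable ℝ p)
    (hhom : ∀ (c : ℝ) (z : E), p (c • z) = c ^ k * p z) {x : ℝ → E} {s : ℝ}
    (hx : HasDerivAt x (-∇ p (x s)) s) :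
    HasDerivAt (‖x ·‖ ^ 2) (-(2 * k * p (x s))) s := by
  convert hx.norm_sq using 1
  rw [inner_neg_right, real_inner_comm, inner_gradient_self_of_homogeneous hp hhom]
  ring

theorem antitoneOn_norm_of_neg_gradient (hp : Differentiable ℝ p)
    (hhom : ∀ (c : ℝ) (z : E), p (c • z) = c ^ k * p z) (hpos : ∀ z, 0 ≤ p z)
    {x : ℝ → E} {I : Set ℝ} (hI : Convex ℝ I) (hx : IsSolutionOn (fun z => -∇ p z) x I) :
    AntitoneOn (‖x ·‖) I := by
  have hderiv (s) (hs : s ∈ I) := hasDerivAt_norm_sq_of_neg_gradient hp hhom (hx s hs)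
  have hsq : AntitoneOn (‖x ·‖ ^ 2) I := by
    refine antitoneOn_of_hasDerivWithinAt_nonpos hI
      (fun s hs => (hderiv s hs).continuousAt.continuousWithinAt)
      (fun s hs => (hderiv s (interior_subset hs)).hasDerivWithinAt)
      fun s _ => neg_nonpos.mpr (mul_nonneg (by positivity) (hpos _))
  intro a ha b hb hab
  exact (pow_le_pow_iff_left₀ (norm_nonneg _) (norm_nonneg _) two_ne_zero).mp (hsq ha hb hab)

theorem contDiff_neg_gradient (hp : ContDiff ℝ 2 p) : ContDiff ℝ 1 (fun z => -∇ p z) := by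
  have hfderiv : ContDiff ℝ 1 (fderiv ℝ p) := hp.fderiv_right (by norm_num)
  exact ((toDual ℝ E).symm.contDiff.comp hfderiv).neg

theorem exists_solution_norm_gt_one (hp : ContDiff ℝ 2 p) (hk : k ≠ 0)
    (hhom : ∀ (c : ℝ) (z : E), p (c • z) = c ^ k * p z) {y : E} (hy : ‖y‖ = 1)
    (hpy : p y < 0) :
    ∃ T > 0, ∃ x : ℝ → E, IsSolutionOn (fun z => -∇ p z) x (Icc 0 T) ∧ x 0 = y ∧
      1 < ‖x T‖ := by
  obtain ⟨x, hx0, ε, hε, hx⟩ :=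
    ContDiffAt.exists_forall_mem_closedBall_exists_eq_forall_mem_Ioo_hasDerivAt₀
      (contDiff_neg_gradient hp).contDiffAt 0
  have hgrowth : 0 < -(2 * k * p (x 0)) :=
    neg_pos.mpr (mul_neg_of_pos_of_neg (by positivity) (hx0 ▸ hpy))
  have hsq := hasDerivAt_norm_sq_of_neg_gradient (hp.differentiable (by norm_num)) hhom
    (hx 0 (by simp [hε]))
  obtain ⟨T, hT, hlt⟩ := hsq.exists_lt_of_pos hgrowth hε
  refine ⟨T, hT.1, x, fun s hs => hx s ⟨by linarith [hs.1], by linarith [hs.2, hT.2]⟩,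
    hx0, ?_⟩
  simp only [hx0, hy, one_pow] at hlt
  exact (one_lt_sq_iff₀ (norm_nonneg _)).mp hlt

end GradientFlow

theorem stmt6 {n : ℕ} (p : EuclideanSpace ℝ (Fin n) → ℝ)
    (hpoly : ∃ P : MvPolynomial (Fin n) ℝ, ∀ x : EuclideanSpace ℝ (Fin n),
      p x = MvPolynomial.eval (x : Fin n → ℝ) P)
    (hhom : ∀ (lam : ℝ) (x : EuclideanSpace ℝ (Fin n)), p (lam • x) = lam ^ 4 * p x) :
    (∀ (T : ℝ) (x : ℝ → EuclideanSpace ℝ (Fin n)),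
        IsSolutionOn (fun z => -gradient p z) x (Set.Icc 0 T) →
        ‖x 0‖ ≤ 1 → ∀ t ∈ Set.Icc 0 T, ‖x t‖ ≤ 1) ↔
      ∀ x : EuclideanSpace ℝ (Fin n), 0 ≤ p x := by
  obtain ⟨P, hP⟩ := hpoly
  have hp : ContDiff ℝ 2 p := contDiff_of_forall_eq_mvPolynomial_eval P hP
  constructor
  · intro hinv
    by_contra! ⟨z, hz⟩
    obtain ⟨y, hy, hpy⟩ := exists_norm_eq_one_of_homogeneous_neg four_ne_zero hhom hz
    obtain ⟨T, hT, x, hx, hx0, hxT⟩ := exists_solution_norm_gt_one hp four_ne_zero hhom hy hpy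
    exact (hinv T x hx (hx0 ▸ hy.le) T ⟨hT.le, le_rfl⟩).not_gt hxT
  · intro hpos T x hx hx0 t ht
    exact (antitoneOn_norm_of_neg_gradient (hp.differentiable (by norm_num)) hhom hpos
      (convex_Icc 0 T) hx ⟨le_rfl, ht.1.trans ht.2⟩ ht ht.1).trans hx0
end
end
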